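/- arXiv:2205.08616 — 4 statements merged into one kernel-verified Lean document; each statement's English description precedes it below -/
import Mathlib

section
/- Greatest fixed point unfolding of coTC (equation (2)): for every set D, every binary relation R on D, and all s, t ∈ D, coTC(R)(s,t) holds if and only if R(s,t) holds and for every u ∈ D either R(s,u) holds or coTC(R)(u,t) holds, where coTC(R)(s,t) means that for all n ∈ ℕ and all v_0, …, v_{n+1} ∈ D with v_0 = s and v_{n+1} = t there exists i ≤ n with R(v_i, v_{i+1}). -/
/-- The coTC semantics of Transitive Closure Logic: `coPathTC R s t` holds iff for all
`n : ℕ` and `v_0, …, v_{n+1} ∈ D` with `v_0 = s` and `v_{n+1} = t` there exists `i ≤ n`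
with `R (v i) (v (i+1))`. -/
def coPathTC {D : Type*} (R : D → D → Prop) (s t : D) : Prop :=
  ∀ n : ℕ, ∀ v : Fin (n + 2) → D, v 0 = s → v (Fin.last (n + 1)) = t →
    ∃ i : Fin (n + 1), R (v i.castSucc) (v i.succ)

/-- Greatest fixed point unfolding of coTC (equation (2)):
`coTC(R)(s,t) ⟺ R(s,t) ∧ ∀u (R(s,u) ∨ coTC(R)(u,t))`. -/
theorem coPathTC_unfold {D : Type*} (R : D → D → Prop) (s t : D) :
    coPathTC R s t ↔ R s t ∧ ∀ u : D, R s u ∨ coPathTC R u t := by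
  constructor
  · intro h
    constructor
    · have := h 0 ![s, t] rfl rfl
      obtain ⟨i, hi⟩ := this
      fin_cases i
      simpa using hi
    · intro u
      by_cases hsu : R s u
      · exact Or.inl hsu
      · right
        intro n v hv0 hvl
        have hw0 : (Fin.cons s v : Fin (n + 3) → D) 0 = s := rfl
        have hwl : (Fin.cons s v : Fin (n + 3) → D) (Fin.last (n + 2)) = t := by
          rw [show Fin.last (n + 2) = (Fin.last (n + 1)).succ from rfl, Fin.cons_succ, hvl]
        obtain ⟨i, hi⟩ := h (n + 1) (Fin.cons s v) hw0 hwl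
        refine i.cases ?_ ?_ hi
        · intro h0
          exfalso
          apply hsu
          have e1 : (Fin.cons s v : Fin (n + 3) → D) (Fin.castSucc 0) = s := rfl
          have e2 : (Fin.cons s v : Fin (n + 3) → D) (Fin.succ 0) = v 0 := Fin.cons_succ _ _ _
          rw [e1, e2, hv0] at h0
          exact h0
        · intro j hj
          refine ⟨j, ?_⟩
          have e1 : (Fin.cons s v : Fin (n + 3) → D) j.succ.castSucc = v j.castSucc := by
            rw [← Fin.succ_castSucc, Fin.cons_succ]
          have e2 : (Fin.cons s v : Fin (n + 3) → D) j.succ.succ = v j.succ :=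
            Fin.cons_succ _ _ _
          rwa [e1, e2] at hj
  · rintro ⟨hst, H⟩
    intro n
    match n with
    | 0 =>
      intro v hv0 hvl
      exact ⟨0, by rw [show (0 : Fin 1).castSucc = 0 from rfl,
        show (0 : Fin 1).succ = Fin.last 1 from rfl, hv0, hvl]; exact hst⟩
    | (m + 1) =>
      intro v hv0 hvl
      rcases H (v 1) with h1 | h1
      · exact ⟨0, by rw [show (0 : Fin (m + 2)).castSucc = 0 from rfl, hv0]; exact h1⟩
      · have := h1 m (fun j => v j.succ) rfl hvl
        obtain ⟨i, hi⟩ := this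
        refine ⟨i.succ, ?_⟩
        rw [← Fin.succ_castSucc]
        exact hi
end

section
/- Relational inequality underlying the incompleteness counterexample: for every set D and all binary relations a, b on D, the transitive closure of (a;a) ∪ (a;b;a) is contained in the composition (a⁺) ; ((b;a⁺)⁺ ∪ a); that is, for all x, y ∈ D, if TransGen((a;a) ∪ (a;b;a)) x y then there exists z ∈ D with TransGen a x z and (TransGen(b ; TransGen a) z y or a z y). -/
lemma ext_aux {D : Type*} {b a : D → D → Prop} {z y w : D}
    (h : Relation.TransGen (Relation.Comp b (Relation.TransGen a)) z y)
    (hw : Relation.TransGen a y w) :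
    Relation.TransGen (Relation.Comp b (Relation.TransGen a)) z w := by
  induction h with
  | single hc => exact Relation.TransGen.single (by obtain ⟨m, hb, ha⟩ := hc; exact ⟨m, hb, ha.trans hw⟩)
  | tail h hc ih => exact Relation.TransGen.tail h (by obtain ⟨m, hb, ha⟩ := hc; exact ⟨m, hb, ha.trans hw⟩)

/-- Relational inequality underlying the incompleteness counterexample:
`(aa ∪ aba)⁺ ≤ a⁺ ((ba⁺)⁺ ∪ a)`. -/
theorem transGen_union_subset {D : Type*} (a b : D → D → Prop) (x y : D)
    (h : Relation.TransGen
      (fun u w => Relation.Comp a a u w ∨ Relation.Comp a (Relation.Comp b a) u w) x y) :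
    ∃ z : D, Relation.TransGen a x z ∧
      (Relation.TransGen (Relation.Comp b (Relation.TransGen a)) z y ∨ a z y) := by
  induction h with
  | single hs =>
    rcases hs with ⟨m, h1, h2⟩ | ⟨m, h1, n, h2, h3⟩
    · exact ⟨m, Relation.TransGen.single h1, Or.inr h2⟩
    · exact ⟨m, Relation.TransGen.single h1,
        Or.inl (Relation.TransGen.single ⟨n, h2, Relation.TransGen.single h3⟩)⟩
  | tail h hs ih =>
    obtain ⟨z, hxz, hzy⟩ := ih
    rcases hs with ⟨m, h1, h2⟩ | ⟨m, h1, n, h2, h3⟩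
    · rcases hzy with hL | ha
      · exact ⟨z, hxz, Or.inl (ext_aux hL ((Relation.TransGen.single h1).tail h2))⟩
      · exact ⟨m, (hxz.tail ha).tail h1, Or.inr h2⟩
    · rcases hzy with hL | ha
      · exact ⟨z, hxz, Or.inl (Relation.TransGen.tail
          (ext_aux hL (Relation.TransGen.single h1)) ⟨n, h2, Relation.TransGen.single h3⟩)⟩
      · exact ⟨m, (hxz.tail ha).tail h1,
          Or.inl (Relation.TransGen.single ⟨n, h2, Relation.TransGen.single h3⟩)⟩
end

section
/- Validity of the counterexample PDL⁺ formula ⟨(aa ∪ aba)⁺⟩p → ⟨a⁺((ba⁺)⁺ ∪ a)⟩p: for every set D, all binary relations a, b on D, every predicate p on D, and every v ∈ D, if there exists w with TransGen((a;a) ∪ (a;b;a)) v w and p(w), then there exists w with ((TransGen a) ; (TransGen(b ; TransGen a) ∪ a)) v w and p(w). -/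
private lemma Btrans_ext {D : Type*} (a b : D → D → Prop) {m w w' : D}
    (h : Relation.TransGen (Relation.Comp b (Relation.TransGen a)) m w)
    (h2 : Relation.TransGen a w w') :
    Relation.TransGen (Relation.Comp b (Relation.TransGen a)) m w' := by
  rw [Relation.TransGen.tail'_iff] at h ⊢
  obtain ⟨x, hmx, y, hby, hyw⟩ := h
  exact ⟨x, hmx, y, hby, hyw.trans h2⟩

/-- Validity of the counterexample PDL⁺ formula
`⟨(aa ∪ aba)⁺⟩p → ⟨a⁺((ba⁺)⁺ ∪ a)⟩p` in every structure. -/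
theorem counterexample_formula_valid {D : Type*} (a b : D → D → Prop) (p : D → Prop)
    (v : D)
    (h : ∃ w : D, Relation.TransGen
        (fun u z => Relation.Comp a a u z ∨ Relation.Comp a (Relation.Comp b a) u z) v w ∧
      p w) :
    ∃ w : D, Relation.Comp (Relation.TransGen a)
        (fun u z => Relation.TransGen (Relation.Comp b (Relation.TransGen a)) u z ∨ a u z)
        v w ∧ p w := by
  obtain ⟨w, htg, hp⟩ := h
  refine ⟨w, ?_, hp⟩
  clear hp
  induction htg with
  | single h =>
    rcases h with ⟨m, h1, h2⟩ | ⟨x, hx, y, hby, hyw⟩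
    · exact ⟨m, Relation.TransGen.single h1, Or.inr h2⟩
    · exact ⟨x, Relation.TransGen.single hx,
        Or.inl (Relation.TransGen.single ⟨y, hby, Relation.TransGen.single hyw⟩)⟩
  | tail _ step ih =>
    obtain ⟨m, hvm, hm⟩ := ih
    rcases step with ⟨n, hwn, hnw'⟩ | ⟨x, hwx, y, hby, hyw'⟩
    · rcases hm with hB | ha
      · exact ⟨m, hvm, Or.inl (Btrans_ext a b hB
          ((Relation.TransGen.single hwn).tail hnw'))⟩
      · exact ⟨n, (hvm.tail ha).tail hwn, Or.inr hnw'⟩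
    · rcases hm with hB | ha
      · exact ⟨m, hvm, Or.inl ((Btrans_ext a b hB
          (Relation.TransGen.single hwx)).tail ⟨y, hby, Relation.TransGen.single hyw'⟩)⟩
      · exact ⟨x, (hvm.tail ha).tail hwx,
          Or.inl (Relation.TransGen.single ⟨y, hby, Relation.TransGen.single hyw'⟩)⟩
end

section
/- Properties of the adversarial structures A_n: for every n ∈ ℕ, let A_n be the structure with domain D_n = {u_0, u_0', u_1, u_1', …, u_{n-1}', u_n, v} (all elements distinct), with a = {(u_i, u_i') : i < n} ∪ {(u_i', u_{i+1}) : i < n} and b = {(u_n, v)}. Then: (i) there is no w ∈ D_n with a(w, v); (ii) there is no w ∈ D_n with TransGen(b ; TransGen a)(w, v); and (iii) TransGen((a;a) ∪ (a;b;a))(u_0, v) does not hold. -/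
/-- The domain of the adversarial structure `A_n`:
elements `u_0, …, u_n`, `u_0', …, u_{n-1}'` and `v`, all pairwise distinct. -/
inductive Adv (n : ℕ) : Type where
  | u : Fin (n + 1) → Adv n
  | u' : Fin n → Adv n
  | v : Adv n

/-- The interpretation of the relation symbol `a` in `A_n`:
`a = {(u_i, u_i') : i < n} ∪ {(u_i', u_{i+1}) : i < n}`. -/
def advA {n : ℕ} : Adv n → Adv n → Prop := fun x y =>
  (∃ i : Fin n, x = Adv.u i.castSucc ∧ y = Adv.u' i) ∨
  (∃ i : Fin n, x = Adv.u' i ∧ y = Adv.u i.succ)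

/-- The interpretation of the relation symbol `b` in `A_n`: `b = {(u_n, v)}`. -/
def advB {n : ℕ} : Adv n → Adv n → Prop := fun x y =>
  x = Adv.u (Fin.last n) ∧ y = Adv.v

/-!
Each of the three relations ends in an `a`-step, and no `a`-edge enters `v`:
the only edge into `v` is the `b`-edge from `u_n`.
-/

namespace Relation

variable {α : Type*} {r s : α → α → Prop} {c : α}

theorem not_transGen_of_forall_not (h : ∀ a, ¬ r a c) (a : α) : ¬ TransGen r a c := fun hac =>
  let ⟨b, _, hbc⟩ := TransGen.tail'_iff.mp hac
  h b hbc

theorem not_comp_of_forall_not (h : ∀ a, ¬ s a c) (a : α) : ¬ Comp r s a c :=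
  fun ⟨b, _, hbc⟩ => h b hbc

end Relation

open Relation

theorem not_advA_v {n : ℕ} (w : Adv n) : ¬ advA w Adv.v := by
  rintro (⟨i, -, h⟩ | ⟨i, -, h⟩) <;> cases h

/-- Properties of the adversarial structures `A_n`:
(i) no `a`-edge into `v`; (ii) no `(b ; a⁺)⁺`-path into `v`;
(iii) `(aa ∪ aba)⁺(u_0, v)` fails. -/
theorem adversarial_model_properties (n : ℕ) :
    (¬ ∃ w : Adv n, advA w Adv.v) ∧
    (¬ ∃ w : Adv n,
      Relation.TransGen (Relation.Comp advB (Relation.TransGen advA)) w Adv.v) ∧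
    ¬ Relation.TransGen
        (fun x y : Adv n => Relation.Comp advA advA x y ∨
          Relation.Comp advA (Relation.Comp advB advA) x y)
        (Adv.u (0 : Fin (n + 1))) Adv.v := by
  have no_a_plus : ∀ w, ¬ TransGen advA w (Adv.v : Adv n) := not_transGen_of_forall_not not_advA_v
  refine ⟨fun ⟨w, h⟩ => not_advA_v w h, fun ⟨w, h⟩ => ?_, ?_⟩
  · exact not_transGen_of_forall_not (not_comp_of_forall_not no_a_plus) w h
  · refine not_transGen_of_forall_not (fun w h => ?_) _
    rcases h with h | h
    · exact not_comp_of_forall_not not_advA_v w h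
    · exact not_comp_of_forall_not (not_comp_of_forall_not not_advA_v) w h
end
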